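/- arXiv:2010.10054 — 2 statements merged into one kernel-verified Lean document; each statement's English description precedes it below -/
import Mathlib

section
/- Let σ : ℝ → ℝ be the logistic sigmoid σ(x) = 1/(1 + exp(−x)). Let z_1, …, z_M index target samples, and for each j let g_j : ℝ → ℝ be differentiable at θ with |g_j'(θ)| ≤ A and |g_j(θ)| ≥ ρ ≥ 0, and let c_j ∈ ℝ be the student prediction on sample j. Let λ ≥ 0 and define the student regularizer R(θ) = λ · (1/M) · Σ_{j=1}^{M} (σ(g_j(θ)) − c_j)². Then R is differentiable at θ and |R'(θ)| ≤ 2λ · ((1/M) · Σ_{j=1}^{M} |σ(g_j(θ)) − c_j|) · A · exp(−ρ). -/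
/-!
The derivative of `R` is `λ/M · ∑ⱼ 2 (σ(gⱼ) - cⱼ) σ'(gⱼ) gⱼ'`, and the logistic derivative
`σ' = σ (1 - σ) = σ(x) σ(-x)` is at most `σ(-|x|) ≤ exp (-|x|) ≤ exp (-ρ)` on samples of margin `ρ`;
bounding each `|gⱼ'|` by `A` leaves the mean absolute residual.
-/

open Real Finset

namespace Real

lemma sigmoid_le_exp (x : ℝ) : sigmoid x ≤ exp x := by
  rw [sigmoid_def, ← inv_inv (exp x), ← exp_neg]
  gcongr
  linarith

lemma sigmoid_mul_one_sub_sigmoid_le_sigmoid_neg_abs (x : ℝ) :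
    sigmoid x * (1 - sigmoid x) ≤ sigmoid (-|x|) := by
  rw [← sigmoid_neg]
  rcases abs_cases x with ⟨hx, -⟩ | ⟨hx, -⟩
  · rw [hx]
    exact mul_le_of_le_one_left (sigmoid_nonneg _) (sigmoid_le_one x)
  · rw [hx, neg_neg]
    exact mul_le_of_le_one_right (sigmoid_nonneg _) (sigmoid_le_one _)

lemma sigmoid_mul_one_sub_sigmoid_le_exp_neg_abs (x : ℝ) :
    sigmoid x * (1 - sigmoid x) ≤ exp (-|x|) :=
  (sigmoid_mul_one_sub_sigmoid_le_sigmoid_neg_abs x).trans (sigmoid_le_exp _)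

end Real

lemma HasDerivAt.sub_const_sq {f : ℝ → ℝ} {f' x : ℝ} (hf : HasDerivAt f f' x) (c : ℝ) :
    HasDerivAt (fun t => (f t - c) ^ 2) (2 * (f x - c) * f') x := by
  simpa using (hf.sub_const c).fun_pow 2

lemma Finset.abs_sum_mul_le_sum_abs_mul {ι : Type*} {s : Finset ι} {a b : ι → ℝ} {B : ℝ}
    (hb : ∀ j ∈ s, |b j| ≤ B) : |∑ j ∈ s, a j * b j| ≤ (∑ j ∈ s, |a j|) * B := by
  calc |∑ j ∈ s, a j * b j| ≤ ∑ j ∈ s, |a j| * |b j| := by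
        simpa only [abs_mul] using abs_sum_le_sum_abs (fun j => a j * b j) s
    _ ≤ ∑ j ∈ s, |a j| * B := by gcongr with j hj; exact hb j hj
    _ = (∑ j ∈ s, |a j|) * B := by rw [sum_mul]

theorem student_regularizer_deriv_bound_general (σ : ℝ → ℝ)
    (hσ : ∀ x : ℝ, σ x = 1 / (1 + Real.exp (-x)))
    (M : ℕ) (g : Fin M → ℝ → ℝ) (c : Fin M → ℝ)
    (θ A ρ lam : ℝ)
    (hg : ∀ j, DifferentiableAt ℝ (g j) θ)
    (hA : ∀ j, |deriv (g j) θ| ≤ A)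
    (hρ : ∀ j, ρ ≤ |g j θ|)
    (hlam : 0 ≤ lam) :
    DifferentiableAt ℝ
        (fun t => lam * ((1 / (M : ℝ)) * ∑ j, (σ (g j t) - c j) ^ 2)) θ ∧
      |deriv (fun t => lam * ((1 / (M : ℝ)) * ∑ j, (σ (g j t) - c j) ^ 2)) θ| ≤
        2 * lam * ((1 / (M : ℝ)) * ∑ j, |σ (g j θ) - c j|) * A *
          Real.exp (-ρ) := by
  obtain rfl : σ = sigmoid := funext fun x => by rw [hσ, sigmoid_def, one_div]
  set dσ : Fin M → ℝ := fun j => sigmoid (g j θ) * (1 - sigmoid (g j θ)) * deriv (g j) θ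
  have hR : HasDerivAt (fun t => lam * ((1 / (M : ℝ)) * ∑ j, (sigmoid (g j t) - c j) ^ 2))
      (lam * ((1 / (M : ℝ)) * ∑ j, (2 * (sigmoid (g j θ) - c j)) * dσ j)) θ :=
    ((HasDerivAt.fun_sum fun j _ =>
      ((hasDerivAt_sigmoid _).comp θ (hg j).hasDerivAt).sub_const_sq (c j)).const_mul _).const_mul _
  refine ⟨hR.differentiableAt, ?_⟩
  have hdσ : ∀ j ∈ univ, |dσ j| ≤ exp (-ρ) * A := fun j _ => by
    rw [abs_mul, abs_of_nonneg (mul_nonneg (sigmoid_nonneg _) (sub_nonneg.2 (sigmoid_le_one _)))]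
    gcongr
    · exact (sigmoid_mul_one_sub_sigmoid_le_exp_neg_abs _).trans (exp_le_exp.2 (neg_le_neg (hρ j)))
    · exact hA j
  calc |deriv _ θ|
      = lam * ((1 / (M : ℝ)) * |∑ j, (2 * (sigmoid (g j θ) - c j)) * dσ j|) := by
        rw [hR.deriv, abs_mul, abs_mul, abs_of_nonneg hlam, abs_of_nonneg (by positivity)]
    _ ≤ lam * ((1 / (M : ℝ)) * ((∑ j, |2 * (sigmoid (g j θ) - c j)|) * (exp (-ρ) * A))) := by
        gcongr
        exact abs_sum_mul_le_sum_abs_mul hdσ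
    _ = 2 * lam * ((1 / (M : ℝ)) * ∑ j, |sigmoid (g j θ) - c j|) * A * exp (-ρ) := by
        simp only [abs_mul, abs_two, ← mul_sum]
        ring

/-- Target-term bound of Lemma 1: with `σ` the logistic sigmoid, `M` target
samples with logits `g j` differentiable at `θ`, `|deriv (g j) θ| ≤ A`,
margins `|g j θ| ≥ ρ ≥ 0`, fixed student predictions `c j`, and `λ ≥ 0`, the
student regularizer `R θ = λ * ((1/M) * ∑ j, (σ (g j θ) - c j)^2)` is
differentiable at `θ` and
`|R' θ| ≤ 2λ * ((1/M) * ∑ j, |σ (g j θ) - c j|) * A * exp (-ρ)`. -/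
theorem student_regularizer_deriv_bound (σ : ℝ → ℝ)
    (hσ : ∀ x : ℝ, σ x = 1 / (1 + Real.exp (-x)))
    (M : ℕ) (hM : 0 < M) (g : Fin M → ℝ → ℝ) (c : Fin M → ℝ)
    (θ A ρ lam : ℝ)
    (hg : ∀ j, DifferentiableAt ℝ (g j) θ)
    (hA : ∀ j, |deriv (g j) θ| ≤ A)
    (hρ0 : 0 ≤ ρ) (hρ : ∀ j, ρ ≤ |g j θ|)
    (hlam : 0 ≤ lam) :
    DifferentiableAt ℝ
        (fun t => lam * ((1 / (M : ℝ)) * ∑ j, (σ (g j t) - c j) ^ 2)) θ ∧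
      |deriv (fun t => lam * ((1 / (M : ℝ)) * ∑ j, (σ (g j t) - c j) ^ 2)) θ| ≤
        2 * lam * ((1 / (M : ℝ)) * ∑ j, |σ (g j θ) - c j|) * A *
          Real.exp (-ρ) :=
  student_regularizer_deriv_bound_general σ hσ M g c θ A ρ lam hg hA hρ hlam
end

section
/- Let σ : ℝ → ℝ be the logistic sigmoid σ(x) = 1/(1 + exp(−x)). Let (x_i, y_i), i = 1, …, N, be labeled source samples with y_i ∈ {0, 1}, and let z_j, j = 1, …, M, be target samples. Suppose for each i the map θ ↦ f_i(θ) ∈ (0,1) (the teacher's prediction σ(g_θ(x_i)) on source sample i) is differentiable at θ, and for each j the logit g_j : ℝ → ℝ is differentiable at θ with |g_j'(θ)| ≤ A and |g_j(θ)| ≥ ρ ≥ 0; let c_j ∈ ℝ be the fixed student predictions and λ ≥ 0. Define the teacher loss L(θ) = S(θ) + λ · (1/M) · Σ_{j=1}^{M} (σ(g_j(θ)) − c_j)², where S(θ) = (1/N) · Σ_{i=1}^{N} [ y_i · log f_i(θ) + (1 − y_i) · log(1 − f_i(θ)) ] is the source cross-entropy term. Then L is differentiable at θ and |L'(θ) −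 S'(θ)| ≤ 2λ · ((1/M) · Σ_{j=1}^{M} |σ(g_j(θ)) − c_j|) · A · exp(−ρ). -/
/-!
`L' - S'` is the derivative `λ/M · ∑ⱼ 2 (σ(gⱼ) - cⱼ) σ'(gⱼ) gⱼ'` of the consistency term.
The sigmoid's derivative `σ'(x) = σ(x) σ(-x) = σ(x)² e^{-x}` is even and at most `e^{-x}`,
hence at most `e^{-|x|} ≤ e^{-ρ}` at the target logits.
-/

open Real Set

lemma sigmoid_mul_one_sub_le_exp_neg_abs (x : ℝ) :
    sigmoid x * (1 - sigmoid x) ≤ exp (-|x|) := by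
  have le_exp_neg : ∀ u : ℝ, sigmoid u * (1 - sigmoid u) ≤ exp (-u) := fun u => by
    rw [← sigmoid_neg, ← sigmoid_mul_rexp_neg, ← mul_assoc]
    have hs : sigmoid u * sigmoid u ≤ 1 :=
      mul_le_one₀ (sigmoid_le_one u) (sigmoid_nonneg u) (sigmoid_le_one u)
    nlinarith [exp_pos (-u)]
  rcases abs_choice x with hx | hx
  · rw [hx]
    exact le_exp_neg x
  · have := le_exp_neg (-x)
    rwa [sigmoid_neg, sub_sub_cancel, mul_comm, ← hx] at this

lemma HasDerivAt.sigmoid_sub_sq {g : ℝ → ℝ} {g' θ : ℝ} (hg : HasDerivAt g g' θ) (c : ℝ) :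
    HasDerivAt (fun t => (sigmoid (g t) - c) ^ 2)
      (2 * (sigmoid (g θ) - c) * (sigmoid (g θ) * (1 - sigmoid (g θ)) * g')) θ := by
  refine ((((hasDerivAt_sigmoid (g θ)).comp θ hg).sub_const c).fun_pow 2).congr_deriv ?_
  simp only [Function.comp_apply, Nat.cast_ofNat, pow_one, Nat.add_one_sub_one]

lemma abs_sigmoid_sub_sq_deriv_le {x c g' A ρ : ℝ} (hg' : |g'| ≤ A) (hρ : ρ ≤ |x|) :
    |2 * (sigmoid x - c) * (sigmoid x * (1 - sigmoid x) * g')| ≤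
      2 * |sigmoid x - c| * A * exp (-ρ) := by
  have hσ' : sigmoid x * (1 - sigmoid x) ≤ exp (-ρ) :=
    (sigmoid_mul_one_sub_le_exp_neg_abs x).trans (exp_le_exp.mpr (neg_le_neg hρ))
  have hσ'0 : 0 ≤ sigmoid x * (1 - sigmoid x) :=
    mul_nonneg (sigmoid_nonneg x) (sub_nonneg.mpr (sigmoid_le_one x))
  rw [abs_mul, abs_mul, abs_mul, abs_two, abs_of_nonneg hσ'0, mul_assoc _ A,
    mul_comm A]
  gcongr

lemma hasDerivAt_weighted_sum_sigmoid_sub_sq_le {ι : Type*} [Fintype ι] {g : ι → ℝ → ℝ}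
    (c : ι → ℝ) {w θ A ρ : ℝ} (hw : 0 ≤ w) (hg : ∀ j, DifferentiableAt ℝ (g j) θ)
    (hA : ∀ j, |deriv (g j) θ| ≤ A) (hρ : ∀ j, ρ ≤ |g j θ|) :
    ∃ T', HasDerivAt (fun t => w * ∑ j, (sigmoid (g j t) - c j) ^ 2) T' θ ∧
      |T'| ≤ 2 * (w * ∑ j, |sigmoid (g j θ) - c j|) * A * exp (-ρ) := by
  refine ⟨_, (HasDerivAt.fun_sum fun j _ => ((hg j).hasDerivAt.sigmoid_sub_sq (c j))).const_mul w,
    ?_⟩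
  rw [abs_mul, abs_of_nonneg hw]
  calc w * |∑ j, 2 * (sigmoid (g j θ) - c j) *
          (sigmoid (g j θ) * (1 - sigmoid (g j θ)) * deriv (g j) θ)|
      ≤ w * ∑ j, 2 * |sigmoid (g j θ) - c j| * A * exp (-ρ) := by
        gcongr
        exact (Finset.abs_sum_le_sum_abs _ _).trans
          (Finset.sum_le_sum fun j _ => abs_sigmoid_sub_sq_deriv_le (hA j) (hρ j))
    _ = 2 * (w * ∑ j, |sigmoid (g j θ) - c j|) * A * exp (-ρ) := by
        simp only [Finset.mul_sum, Finset.sum_mul]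
        exact Finset.sum_congr rfl fun j _ => by ring

lemma DifferentiableAt.mul_log_add_one_sub_mul_log_one_sub {E : Type*} [NormedAddCommGroup E]
    [NormedSpace ℝ E] {f : E → ℝ} {x : E} (hf : DifferentiableAt ℝ f x)
    (hx : f x ∈ Ioo (0 : ℝ) 1) (y : ℝ) :
    DifferentiableAt ℝ (fun t => y * Real.log (f t) + (1 - y) * Real.log (1 - f t)) x :=
  ((hf.log hx.1.ne').const_mul y).add
    (((differentiableAt_const 1).sub hf).log (sub_pos.mpr hx.2).ne' |>.const_mul (1 - y))

theorem teacher_loss_deriv_bound_general (σ : ℝ → ℝ)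
    (hσ : ∀ x : ℝ, σ x = 1 / (1 + Real.exp (-x)))
    (N M : ℕ)
    (f : Fin N → ℝ → ℝ) (y : Fin N → ℝ)
    (g : Fin M → ℝ → ℝ) (c : Fin M → ℝ)
    (θ A ρ lam : ℝ)
    (hf : ∀ i, DifferentiableAt ℝ (f i) θ)
    (hf01 : ∀ i, f i θ ∈ Set.Ioo (0 : ℝ) 1)
    (hg : ∀ j, DifferentiableAt ℝ (g j) θ)
    (hA : ∀ j, |deriv (g j) θ| ≤ A)
    (hρ : ∀ j, ρ ≤ |g j θ|)
    (hlam : 0 ≤ lam) :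
    DifferentiableAt ℝ
        (fun t =>
          ((1 / (N : ℝ)) *
              ∑ i, (y i * Real.log (f i t) +
                (1 - y i) * Real.log (1 - f i t))) +
            lam * ((1 / (M : ℝ)) * ∑ j, (σ (g j t) - c j) ^ 2)) θ ∧
      |deriv
          (fun t =>
            ((1 / (N : ℝ)) *
                ∑ i, (y i * Real.log (f i t) +
                  (1 - y i) * Real.log (1 - f i t))) +
              lam * ((1 / (M : ℝ)) * ∑ j, (σ (g j t) - c j) ^ 2)) θ -
        deriv
          (fun t =>
            (1 / (N : ℝ)) *
              ∑ i, (y i * Real.log (f i t) +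
                (1 - y i) * Real.log (1 - f i t))) θ| ≤
        2 * lam * ((1 / (M : ℝ)) * ∑ j, |σ (g j θ) - c j|) * A *
          Real.exp (-ρ) := by
  obtain rfl : σ = sigmoid := funext fun x => by rw [hσ, one_div, sigmoid_def]
  have hS := (DifferentiableAt.fun_sum (u := Finset.univ) fun i _ =>
    DifferentiableAt.mul_log_add_one_sub_mul_log_one_sub (hf i) (hf01 i) (y i)).const_mul
      (1 / (N : ℝ))
  obtain ⟨T', hT, hT'⟩ := hasDerivAt_weighted_sum_sigmoid_sub_sq_le c
    (one_div_nonneg.mpr (Nat.cast_nonneg M)) hg hA hρ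
  have hL := hS.hasDerivAt.fun_add (hT.const_mul lam)
  refine ⟨hL.differentiableAt, ?_⟩
  rw [hL.deriv, add_sub_cancel_left]
  calc |lam * T'| = lam * |T'| := by rw [abs_mul, abs_of_nonneg hlam]
    _ ≤ lam * (2 * ((1 / (M : ℝ)) * ∑ j, |sigmoid (g j θ) - c j|) * A * exp (-ρ)) := by
      gcongr
    _ = _ := by ring

/-- Lemma 1 of the paper (precise form): the teacher loss
`L θ = S θ + λ * (1/M) * ∑ j, (σ (g j θ) - c j)^2`, where
`S θ = (1/N) * ∑ i, (y i * log (f i θ) + (1 - y i) * log (1 - f i θ))` is the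
source cross-entropy term, is differentiable at `θ`, and its derivative
deviates from the derivative of the source term by at most
`2λ * ((1/M) * ∑ j, |σ (g j θ) - c j|) * A * exp (-ρ)`. -/
theorem teacher_loss_deriv_bound (σ : ℝ → ℝ)
    (hσ : ∀ x : ℝ, σ x = 1 / (1 + Real.exp (-x)))
    (N M : ℕ) (hN : 0 < N) (hM : 0 < M)
    (f : Fin N → ℝ → ℝ) (y : Fin N → ℝ)
    (g : Fin M → ℝ → ℝ) (c : Fin M → ℝ)
    (θ A ρ lam : ℝ)
    (hy : ∀ i, y i = 0 ∨ y i = 1)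
    (hf : ∀ i, DifferentiableAt ℝ (f i) θ)
    (hf01 : ∀ i, f i θ ∈ Set.Ioo (0 : ℝ) 1)
    (hg : ∀ j, DifferentiableAt ℝ (g j) θ)
    (hA : ∀ j, |deriv (g j) θ| ≤ A)
    (hρ0 : 0 ≤ ρ) (hρ : ∀ j, ρ ≤ |g j θ|)
    (hlam : 0 ≤ lam) :
    DifferentiableAt ℝ
        (fun t =>
          ((1 / (N : ℝ)) *
              ∑ i, (y i * Real.log (f i t) +
                (1 - y i) * Real.log (1 - f i t))) +
            lam * ((1 / (M : ℝ)) * ∑ j, (σ (g j t) - c j) ^ 2)) θ ∧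
      |deriv
          (fun t =>
            ((1 / (N : ℝ)) *
                ∑ i, (y i * Real.log (f i t) +
                  (1 - y i) * Real.log (1 - f i t))) +
              lam * ((1 / (M : ℝ)) * ∑ j, (σ (g j t) - c j) ^ 2)) θ -
        deriv
          (fun t =>
            (1 / (N : ℝ)) *
              ∑ i, (y i * Real.log (f i t) +
                (1 - y i) * Real.log (1 - f i t))) θ| ≤
        2 * lam * ((1 / (M : ℝ)) * ∑ j, |σ (g j θ) - c j|) * A *
          Real.exp (-ρ) :=
  teacher_loss_deriv_bound_general σ hσ N M f y g c θ A ρ lam hf hf01 hg hA hρ hlam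
end
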